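/- Let d ≥ 2 and n ≥ d + 1. A t×n binary code C is a (≤d)-union-free code with fast decoding ((≤d)-UFFD code) if and only if C is both a (=d)-union-free code with fast decoding ((=d)-UFFD code) and a (d−1)-disjunctive code. -/
import Mathlib


open Finset

/-- The Boolean sum (componentwise OR) of the columns of `C` indexed by `S`. -/
noncomputable def boolSum {t n : ℕ} (C : Fin t → Fin n → Bool) (S : Finset (Fin n)) : Fin t → Bool :=
  fun r => S.sup fun i => C r i

/-- `covers x y` : the vector `x` covers the vector `y`, i.e. `x ∨ y = x`. -/
def covers {t : ℕ} (x y : Fin t → Bool) : Prop := ∀ r, y r = true → x r = true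

instance {t : ℕ} (x y : Fin t → Bool) : Decidable (covers x y) := by
  unfold covers; infer_instance

/-- `C` is `d`-disjunctive: the Boolean sum of any `d` columns covers no other column. -/
def Disjunctive {t n : ℕ} (d : ℕ) (C : Fin t → Fin n → Bool) : Prop :=
  ∀ D : Finset (Fin n), D.card = d → ∀ j ∉ D, ¬ covers (boolSum C D) (fun i => C i j)

/-- `C` is a strongly `d`-separable matrix. -/
def SSM {t n : ℕ} (d : ℕ) (C : Fin t → Fin n → Bool) : Prop :=
  ∀ D0 : Finset (Fin n), D0.card = d →
    {i : Fin n | ∀ D' : Finset (Fin n), boolSum C D' = boolSum C D0 → i ∈ D'} = ↑D0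

/-- `C` is a `(=d)`-union-free code. -/
def UnionFreeEq {t n : ℕ} (d : ℕ) (C : Fin t → Fin n → Bool) : Prop :=
  ∀ D1 D2 : Finset (Fin n), D1.card = d → D2.card = d → D1 ≠ D2 →
    boolSum C D1 ≠ boolSum C D2

/-- `C` is a `(≤d)`-union-free code. -/
def UnionFreeLe {t n : ℕ} (d : ℕ) (C : Fin t → Fin n → Bool) : Prop :=
  ∀ D1 D2 : Finset (Fin n), D1.card ≤ d → D2.card ≤ d → D1 ≠ D2 →
    boolSum C D1 ≠ boolSum C D2

/-- The number of columns of `C` covered by the vector `r`. -/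
def coveredCount {t n : ℕ} (C : Fin t → Fin n → Bool) (r : Fin t → Bool) : ℕ :=
  (Finset.univ.filter fun j : Fin n => covers r (fun i => C i j)).card

/-- `C` is a `(=d)`-union-free code with fast decoding. -/
def UFFDEq {t n : ℕ} (d : ℕ) (C : Fin t → Fin n → Bool) : Prop :=
  UnionFreeEq d C ∧
    ∀ D : Finset (Fin n), D.card = d →
      (coveredCount C (boolSum C D) : ℝ) ≤ (n : ℝ) ^ ((1 : ℝ) / d)

/-- `C` is a `(≤d)`-union-free code with fast decoding. -/
def UFFDLe {t n : ℕ} (d : ℕ) (C : Fin t → Fin n → Bool) : Prop :=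
  UnionFreeLe d C ∧
    ∀ D : Finset (Fin n), D.card ≤ d →
      (coveredCount C (boolSum C D) : ℝ) ≤ (n : ℝ) ^ ((1 : ℝ) / d)

lemma boolSum_true_iff {t n : ℕ} (C : Fin t → Fin n → Bool) (S : Finset (Fin n)) (r : Fin t) :
    boolSum C S r = true ↔ ∃ i ∈ S, C r i = true := by
  unfold boolSum
  constructor
  · intro h
    by_contra hc
    push_neg at hc
    have : S.sup (fun i => C r i) = ⊥ :=
      (Finset.sup_eq_bot_iff _ S).mpr (fun i hi => by have := hc i hi; simpa using this)
    simp [this] at h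
  · rintro ⟨i, hi, hfi⟩
    have h2 : C r i ≤ S.sup (fun i => C r i) := Finset.le_sup hi
    rw [hfi] at h2
    exact le_antisymm (by simp) h2

lemma covers_boolSum_of_mem {t n : ℕ} (C : Fin t → Fin n → Bool) {S : Finset (Fin n)}
    {j : Fin n} (hj : j ∈ S) : covers (boolSum C S) (fun i => C i j) := by
  intro r hr
  exact (boolSum_true_iff C S r).mpr ⟨j, hj, hr⟩

lemma covers_boolSum_mono {t n : ℕ} (C : Fin t → Fin n → Bool) {A B : Finset (Fin n)}
    (hAB : A ⊆ B) {x : Fin t → Bool} (h : covers (boolSum C A) x) :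
    covers (boolSum C B) x := by
  intro r hr
  obtain ⟨i, hi, hCi⟩ := (boolSum_true_iff C A r).mp (h r hr)
  exact (boolSum_true_iff C B r).mpr ⟨i, hAB hi, hCi⟩

/-- `C` is a `(≤d)`-UFFD code iff it is a `(=d)`-UFFD code
and a `(d-1)`-disjunctive code. -/
theorem UFFDLe_iff {t n d : ℕ} (hd : 2 ≤ d) (hn : d + 1 ≤ n)
    (C : Fin t → Fin n → Bool) :
    UFFDLe d C ↔ UFFDEq d C ∧ Disjunctive (d - 1) C := by
  constructor
  · rintro ⟨hUF, hFD⟩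
    refine ⟨⟨fun D1 D2 h1 h2 hne => hUF D1 D2 h1.le h2.le hne,
            fun D hD => hFD D hD.le⟩, ?_⟩
    intro D hD j hj hcov
    have hcard : (insert j D).card = d := by
      rw [Finset.card_insert_of_notMem hj, hD]; omega
    refine hUF D (insert j D) (by omega) (by omega)
      (fun h => hj (h ▸ Finset.mem_insert_self j D)) ?_
    funext r
    rw [show boolSum C (insert j D) r = C r j ⊔ boolSum C D r from by
      unfold boolSum; rw [Finset.sup_insert]]
    cases hCrj : C r j with
    | false => simp
    | true => simp [hcov r hCrj]
  · rintro ⟨⟨hUF, hFD⟩, hDis⟩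
    -- disjunctiveness for all sizes ≤ d - 1
    have hdisj : ∀ D : Finset (Fin n), D.card ≤ d - 1 → ∀ j ∉ D,
        ¬ covers (boolSum C D) (fun i => C i j) := by
      intro D hD j hj hcov
      have hDsub : D ⊆ Finset.univ.erase j := fun i hi =>
        Finset.mem_erase.mpr ⟨fun h => hj (h ▸ hi), Finset.mem_univ i⟩
      have hcard : (Finset.univ.erase j : Finset (Fin n)).card = n - 1 := by
        rw [Finset.card_erase_of_mem (Finset.mem_univ j)]; simp
      obtain ⟨D', hDD', hD'sub, hD'card⟩ :=
        Finset.exists_subsuperset_card_eq hDsub hD (by omega)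
      have hjD' : j ∉ D' := fun h => (Finset.mem_erase.mp (hD'sub h)).1 rfl
      exact hDis D' hD'card j hjD' (covers_boolSum_mono C hDD' hcov)
    -- key: boolSum equality forces subset when the right card is small
    have hkey : ∀ A B : Finset (Fin n), boolSum C A = boolSum C B →
        B.card ≤ d - 1 → A ⊆ B := by
      intro A B heq hB j hjA
      by_contra hjB
      exact hdisj B hB j hjB (heq ▸ covers_boolSum_of_mem C hjA)
    constructor
    · intro D1 D2 h1 h2 hne heq
      by_cases hc1 : D1.card = d
      · by_cases hc2 : D2.card = d
        · exact hUF D1 D2 hc1 hc2 hne heq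
        · have h12 : D1 ⊆ D2 := hkey D1 D2 heq (by omega)
          exact absurd (Finset.card_le_card h12) (by omega)
      · have h21 : D2 ⊆ D1 := hkey D2 D1 heq.symm (by omega)
        have : D2.card ≤ d - 1 := le_trans (Finset.card_le_card h21) (by omega)
        have h12 : D1 ⊆ D2 := hkey D1 D2 heq this
        exact hne (Finset.Subset.antisymm h12 h21)
    · intro D hD
      -- a set of size d exists; its coveredCount is at least d
      obtain ⟨D0, _, hD0⟩ := Finset.exists_subset_card_eq
        (show d ≤ (Finset.univ : Finset (Fin n)).card by simp; omega)
      have hD0le := hFD D0 hD0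
      have hd_le : (d : ℝ) ≤ (n : ℝ) ^ ((1 : ℝ) / d) := by
        refine le_trans ?_ hD0le
        have : D0 ⊆ Finset.univ.filter fun j : Fin n =>
            covers (boolSum C D0) (fun i => C i j) := fun j hj =>
          Finset.mem_filter.mpr ⟨Finset.mem_univ j, covers_boolSum_of_mem C hj⟩
        have := Finset.card_le_card this
        unfold coveredCount
        exact_mod_cast hD0 ▸ this
      by_cases hDd : D.card = d
      · exact hFD D hDd
      · -- coveredCount equals D.card ≤ d - 1 < d
        have hDle : D.card ≤ d - 1 := by omega
        have hfilter : (Finset.univ.filter fun j : Fin n =>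
            covers (boolSum C D) (fun i => C i j)) = D := by
          ext j
          simp only [Finset.mem_filter, Finset.mem_univ, true_and]
          constructor
          · intro hcov
            by_contra hjD
            exact hdisj D hDle j hjD hcov
          · intro hj; exact covers_boolSum_of_mem C hj
        have : coveredCount C (boolSum C D) = D.card := by
          unfold coveredCount; rw [hfilter]
        rw [this]
        refine le_trans ?_ hd_le
        exact_mod_cast Nat.le_of_lt (by omega)
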